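/- arXiv:2602.10077 — 3 statements merged into one kernel-verified Lean document; each statement's English description precedes it below -/
import Mathlib

section
/- Let E be a real normed vector space, let θ > 0, and let G : E → ℝ be convex, continuously Fréchet differentiable, with G(0) = 0. Then the following are equivalent: (i) θ·‖u‖ ≤ G(u) for all u ∈ E; (ii) θ·‖u‖ ≤ (DG(u))(u) for all u ∈ E, where DG(u) denotes the Fréchet derivative of G at u. -/
/-!
If `G` is convex, the tangent inequality at `u` evaluated at `0` gives `G u - G 0 ≤ DG(u) u`,
so coercivity of `G` passes to `u ↦ DG(u) u`. Conversely, the mean value theorem on the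
segment `[0, u]` gives `G u - G 0 = DG(c • u) u` for some `c ∈ (0, 1)`, and
`DG(c • u) u = DG(c • u) (c • u) / c ≥ θ ‖c • u‖ / c = θ ‖u‖`.
-/

open Set

section

variable {E : Type*} [NormedAddCommGroup E] [NormedSpace ℝ E]

theorem ConvexOn.apply_sub_le_sub_of_hasFDerivAt {f : E → ℝ} {f' : E →L[ℝ] ℝ} {s : Set E}
    {x y : E} (hf : ConvexOn ℝ s f) (hs : Convex ℝ s) (hx : x ∈ s) (hy : y ∈ s)
    (hf' : HasFDerivAt f f' x) : f' (y - x) ≤ f y - f x := by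
  set g := f ∘ AffineMap.lineMap (k := ℝ) x y
  have hg : ConvexOn ℝ (Icc 0 1) g :=
    (hf.comp_affineMap _).subset (hs.mapsTo_lineMap hx hy) (convex_Icc 0 1)
  have hg' : HasDerivAt g (f' (y - x)) 0 := by
    apply HasFDerivAt.comp_hasDerivAt
    · simpa using hf'
    · exact AffineMap.hasDerivAt_lineMap
  simpa [g, slope] using
    hg.le_slope_of_hasDerivAt (by simp) (by simp) zero_lt_one hg'

theorem exists_mem_Ioo_sub_eq_fderiv_smul_apply {f : E → ℝ} {f' : E → E →L[ℝ] ℝ}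
    (hf : ∀ x, HasFDerivAt f (f' x) x) (u : E) :
    ∃ c ∈ Ioo (0 : ℝ) 1, f u - f 0 = f' (c • u) u := by
  have hray : ∀ t : ℝ, HasDerivAt (fun s : ℝ => f (s • u)) (f' (t • u) u) t := fun t => by
    have := (hf (t • u)).comp_hasDerivAt t ((hasDerivAt_id t).smul_const u)
    rwa [one_smul] at this
  obtain ⟨c, hc, hslope⟩ := exists_hasDerivAt_eq_slope (fun s : ℝ => f (s • u)) _ one_pos
    (continuous_iff_continuousAt.2 fun t => (hray t).continuousAt).continuousOn
    fun t _ => hray t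
  exact ⟨c, hc, by simpa using hslope.symm⟩

theorem ContinuousLinearMap.mul_norm_le_of_mul_norm_smul_le (L : E →L[ℝ] ℝ) {θ c : ℝ} {u : E}
    (hc : 0 < c) (h : θ * ‖c • u‖ ≤ L (c • u)) : θ * ‖u‖ ≤ L u := by
  rw [norm_smul, Real.norm_of_nonneg hc.le, map_smul, smul_eq_mul] at h
  exact le_of_mul_le_mul_left (by linarith) hc

end

theorem coercivity_iff_fderiv_coercivity_general
    {E : Type*} [NormedAddCommGroup E] [NormedSpace ℝ E]
    (θ : ℝ)
    (G : E → ℝ) (G' : E → (E →L[ℝ] ℝ))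
    (hconv : ConvexOn ℝ Set.univ G)
    (hderiv : ∀ u : E, HasFDerivAt G (G' u) u)
    (h0 : G 0 = 0) :
    (∀ u : E, θ * ‖u‖ ≤ G u) ↔ (∀ u : E, θ * ‖u‖ ≤ G' u u) := by
  constructor
  · intro h u
    have htangent := hconv.apply_sub_le_sub_of_hasFDerivAt convex_univ trivial
      (mem_univ 0) (hderiv u)
    rw [zero_sub, map_neg, h0] at htangent
    linarith [h u]
  · intro h u
    obtain ⟨c, hc, hmvt⟩ := exists_mem_Ioo_sub_eq_fderiv_smul_apply hderiv u
    rw [h0, sub_zero] at hmvt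
    rw [hmvt]
    exact (G' (c • u)).mul_norm_le_of_mul_norm_smul_le hc.1 (h (c • u))

/-- For `θ > 0` and a convex, continuously Fréchet differentiable
`G : E → ℝ` with `G 0 = 0`, coercivity `θ‖u‖ ≤ G u` for all `u` is equivalent to
`θ‖u‖ ≤ (DG u) u` for all `u`. -/
theorem coercivity_iff_fderiv_coercivity
    {E : Type*} [NormedAddCommGroup E] [NormedSpace ℝ E]
    (θ : ℝ) (hθ : 0 < θ)
    (G : E → ℝ) (G' : E → (E →L[ℝ] ℝ))
    (hconv : ConvexOn ℝ Set.univ G)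
    (hderiv : ∀ u : E, HasFDerivAt G (G' u) u)
    (hcont : Continuous G')
    (h0 : G 0 = 0) :
    (∀ u : E, θ * ‖u‖ ≤ G u) ↔ (∀ u : E, θ * ‖u‖ ≤ G' u u) :=
  coercivity_iff_fderiv_coercivity_general θ G G' hconv hderiv h0
end

section
/- Let M : ℝ → ℝ be an N-function and let M̄ denote its conjugate. Let N ≥ 1, let G : ℝ^N → ℝ be convex and differentiable with G(0) = 0, and let a ≥ 0, b > 0, c > 0. Suppose φ : ℝ → [0,∞) satisfies M̄(φ(s)) ≤ M(c·s) for all s ∈ ℝ, and suppose that for every ξ = (ξ_1,…,ξ_N) ∈ ℝ^N and every index j, |∂G/∂ξ_j (ξ)| ≤ a + b·Σ_{i=1}^N φ(ξ_i). Then for every ξ ∈ ℝ^N, G(ξ) ≤ (N/c)·M̄(a) + ((1 + 2bN)/c)·Σ_{j=1}^N M(c·ξ_j). -/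
/-!
Convexity and `G 0 = 0` give `G ξ ≤ DG(ξ) ξ = ∑ⱼ ξⱼ ∂ⱼG(ξ)`, so by the growth condition
`c · G ξ ≤ ∑ⱼ |c ξⱼ| (a + b ∑ᵢ φ(ξᵢ))`. Young's inequality bounds `|c ξⱼ| a` by
`M(c ξⱼ) + M̄(a)` and `|c ξⱼ| φ(ξᵢ)` by `M(c ξⱼ) + M̄(φ(ξᵢ)) ≤ M(c ξⱼ) + M(c ξᵢ)`;
summing over `i` and `j` gives the bound.
-/

/-- An N-function: continuous, convex, even, positive for positive arguments,
sublinear at `0` and superlinear at `∞`. -/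
def IsNFunction (M : ℝ → ℝ) : Prop :=
  Continuous M ∧ ConvexOn ℝ Set.univ M ∧ (∀ t : ℝ, M (-t) = M t) ∧
  (∀ t : ℝ, 0 < t → 0 < M t) ∧
  Filter.Tendsto (fun t => M t / t) (nhdsWithin 0 (Set.Ioi 0)) (nhds 0) ∧
  Filter.Tendsto (fun t => M t / t) Filter.atTop Filter.atTop

/-- The conjugate (Legendre transform) of an N-function:
`M̄ s = sup { |s|·t − M t : t ≥ 0 }`. -/
noncomputable def conjN (M : ℝ → ℝ) (s : ℝ) : ℝ :=
  sSup ((fun t => |s| * t - M t) '' Set.Ici (0 : ℝ))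

open Filter

theorem ConvexOn.add_fderiv_apply_sub_le {E : Type*} [NormedAddCommGroup E] [NormedSpace ℝ E]
    {f : E → ℝ} (hf : ConvexOn ℝ Set.univ f) {x : E} (hfx : DifferentiableAt ℝ f x) (y : E) :
    f x + fderiv ℝ f x (y - x) ≤ f y := by
  set line : ℝ →ᵃ[ℝ] E := AffineMap.lineMap x y
  have hderiv : HasDerivAt (f ∘ line) (fderiv ℝ f x (y - x)) 0 := by
    have hline : HasDerivAt line (y - x) 0 := by
      simpa using AffineMap.hasDerivAt_lineMap (a := x) (b := y) (x := (0 : ℝ))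
    have hfx' : HasFDerivAt f (fderiv ℝ f x) (line 0) := by simpa [line] using hfx.hasFDerivAt
    exact hfx'.comp_hasDerivAt 0 hline
  have hslope := (hf.comp_affineMap line).le_slope_of_hasDerivAt (Set.mem_univ 0)
    (Set.mem_univ 1) one_pos hderiv
  simp only [slope, Function.comp_apply, AffineMap.lineMap_apply_zero,
    AffineMap.lineMap_apply_one, vsub_eq_sub, sub_zero, inv_one, one_smul, line] at hslope
  linarith

theorem ContinuousLinearMap.apply_eq_sum_smul_single {ι F : Type*} [Fintype ι] [DecidableEq ι]
    [AddCommGroup F] [Module ℝ F] [TopologicalSpace F] (L : (ι → ℝ) →L[ℝ] F) (x : ι → ℝ) :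
    L x = ∑ i, x i • L (Pi.single i 1) := by
  conv_lhs => rw [pi_eq_sum_univ' x]
  simp only [map_sum, map_smul]

theorem ConvexOn.le_add_sum_mul_fderiv_single {ι : Type*} [Fintype ι] [DecidableEq ι]
    {f : (ι → ℝ) → ℝ} (hf : ConvexOn ℝ Set.univ f) {x : ι → ℝ} (hfx : DifferentiableAt ℝ f x) :
    f x ≤ f 0 + ∑ i, x i * fderiv ℝ f x (Pi.single i 1) := by
  have h := hf.add_fderiv_apply_sub_le hfx 0
  rw [zero_sub, map_neg, (fderiv ℝ f x).apply_eq_sum_smul_single] at h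
  simp only [smul_eq_mul] at h
  linarith

theorem bddAbove_image_mul_sub {M : ℝ → ℝ} (hcont : Continuous M)
    (hsup : Tendsto (fun t => M t / t) atTop atTop) (s : ℝ) :
    BddAbove ((fun t => s * t - M t) '' Set.Ici 0) := by
  obtain ⟨T, hT⟩ := eventually_atTop.1 ((hsup.eventually_ge_atTop s).and (eventually_gt_atTop 0))
  obtain ⟨K, hK⟩ := (isCompact_Icc.image (by fun_prop : Continuous fun t => s * t - M t) :
    IsCompact ((fun t => s * t - M t) '' Set.Icc 0 T)).bddAbove
  refine ⟨max K 0, ?_⟩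
  rintro _ ⟨t, ht, rfl⟩
  rcases le_or_gt t T with htT | hTt
  · exact (hK ⟨t, ⟨ht, htT⟩, rfl⟩).trans (le_max_left _ _)
  · obtain ⟨hMt, htpos⟩ := hT t hTt.le
    have : s * t ≤ M t := (le_div_iff₀ htpos).1 hMt
    exact le_max_of_le_right (by linarith)

theorem mul_le_add_conjN {M : ℝ → ℝ} (hcont : Continuous M)
    (hsup : Tendsto (fun t => M t / t) atTop atTop) (s : ℝ) {t : ℝ} (ht : 0 ≤ t) :
    s * t ≤ M t + conjN M s := by
  have : |s| * t - M t ≤ conjN M s :=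
    le_csSup (bddAbove_image_mul_sub hcont hsup |s|) ⟨t, ht, rfl⟩
  nlinarith [le_abs_self s]

theorem sum_mul_add_mul_sum_le {ι : Type*} [Fintype ι] {t p m : ι → ℝ} {a b A : ℝ} (hb : 0 ≤ b)
    (hta : ∀ j, t j * a ≤ m j + A) (htp : ∀ i j, t j * p i ≤ m j + m i) :
    ∑ j, t j * (a + b * ∑ i, p i) ≤
      Fintype.card ι * A + (1 + 2 * b * Fintype.card ι) * ∑ j, m j := by
  have hpair : ∑ j, ∑ i, t j * p i ≤ ∑ j, ∑ i, (m j + m i) :=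
    Finset.sum_le_sum fun j _ => Finset.sum_le_sum fun i _ => htp i j
  calc ∑ j, t j * (a + b * ∑ i, p i) = ∑ j, t j * a + b * ∑ j, ∑ i, t j * p i := by
        simp only [mul_add, Finset.sum_add_distrib, Finset.mul_sum, mul_left_comm]
    _ ≤ ∑ j, (m j + A) + b * ∑ j, ∑ i, (m j + m i) := by
        gcongr with j
        exact hta j
    _ = Fintype.card ι * A + (1 + 2 * b * Fintype.card ι) * ∑ j, m j := by
        simp only [Finset.sum_add_distrib, Finset.sum_const, Finset.card_univ, nsmul_eq_mul,
          ← Finset.mul_sum]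
        ring

theorem growth_of_partial_growth_general
    (M : ℝ → ℝ) (hM : IsNFunction M)
    (N : ℕ)
    (G : (Fin N → ℝ) → ℝ)
    (hGconv : ConvexOn ℝ Set.univ G)
    (hGdiff : Differentiable ℝ G)
    (hG0 : G 0 = 0)
    (a b c : ℝ) (hb : 0 < b) (hc : 0 < c)
    (φ : ℝ → ℝ)
    (hφ : ∀ s : ℝ, conjN M (φ s) ≤ M (c * s))
    (hGgrowth : ∀ ξ : Fin N → ℝ, ∀ j : Fin N,
      |fderiv ℝ G ξ (Pi.single j 1)| ≤ a + b * ∑ i : Fin N, φ (ξ i)) :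
    ∀ ξ : Fin N → ℝ,
      G ξ ≤ (N / c) * conjN M a + ((1 + 2 * b * N) / c) * ∑ j : Fin N, M (c * ξ j) := by
  obtain ⟨hcont, -, heven, -, -, hsup⟩ := hM
  intro ξ
  have hyoung (s : ℝ) (j : Fin N) : |c * ξ j| * s ≤ M (c * ξ j) + conjN M s := by
    have hM_abs : M |c * ξ j| = M (c * ξ j) := by
      rcases abs_choice (c * ξ j) with h | h <;> rw [h]
      exact heven _
    rw [mul_comm, ← hM_abs]
    exact mul_le_add_conjN hcont hsup s (abs_nonneg _)
  have hG_le : c * G ξ ≤ ∑ j, |c * ξ j| * (a + b * ∑ i, φ (ξ i)) := by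
    have hsupport := hGconv.le_add_sum_mul_fderiv_single (hGdiff ξ)
    rw [hG0, zero_add, ← mul_le_mul_iff_right₀ hc, Finset.mul_sum] at hsupport
    refine hsupport.trans (Finset.sum_le_sum fun j _ => ?_)
    rw [← mul_assoc]
    refine (le_abs_self _).trans ?_
    rw [abs_mul]
    exact mul_le_mul_of_nonneg_left (hGgrowth ξ j) (abs_nonneg _)
  have hsum := sum_mul_add_mul_sum_le (t := fun j => |c * ξ j|) (p := fun i => φ (ξ i)) hb.le
    (fun j => hyoung a j) (fun i j => (hyoung _ j).trans (by linarith [hφ (ξ i)]))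
  rw [Fintype.card_fin] at hsum
  rw [show (N / c) * conjN M a + ((1 + 2 * b * N) / c) * ∑ j, M (c * ξ j) =
      (N * conjN M a + (1 + 2 * b * N) * ∑ j, M (c * ξ j)) / c by ring, le_div_iff₀ hc]
  linarith

/-- the growth condition on the partial derivatives of a convex
differentiable `G` with `G 0 = 0` implies a growth bound on `G` itself. -/
theorem growth_of_partial_growth
    (M : ℝ → ℝ) (hM : IsNFunction M)
    (N : ℕ) (hN : 1 ≤ N)
    (G : (Fin N → ℝ) → ℝ)
    (hGconv : ConvexOn ℝ Set.univ G)
    (hGdiff : Differentiable ℝ G)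
    (hG0 : G 0 = 0)
    (a b c : ℝ) (ha : 0 ≤ a) (hb : 0 < b) (hc : 0 < c)
    (φ : ℝ → ℝ) (hφ_nonneg : ∀ s : ℝ, 0 ≤ φ s)
    (hφ : ∀ s : ℝ, conjN M (φ s) ≤ M (c * s))
    (hGgrowth : ∀ ξ : Fin N → ℝ, ∀ j : Fin N,
      |fderiv ℝ G ξ (Pi.single j 1)| ≤ a + b * ∑ i : Fin N, φ (ξ i)) :
    ∀ ξ : Fin N → ℝ,
      G ξ ≤ (N / c) * conjN M a + ((1 + 2 * b * N) / c) * ∑ j : Fin N, M (c * ξ j) :=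
  growth_of_partial_growth_general M hM N G hGconv hGdiff hG0 a b c hb hc φ hφ hGgrowth
end

section
/- Let B : ℝ → ℝ be an N-function and let B̄ denote its conjugate. Let f₀ ≥ 0 and c > 0, let φ : ℝ → [0,∞) be even and nondecreasing on [0,∞) with B̄(φ(t)) ≤ B(c·t) for all t ∈ ℝ, and let h : ℝ → ℝ be a locally integrable function with |h(t)| ≤ f₀ + c·φ(t) for all t ∈ ℝ. Define H(u) = ∫₀^u h(t) dt. Then for every u ∈ ℝ, |H(u)| ≤ (1/c)·B̄(f₀) + (2 + 1/c)·B(c·u). -/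
/-!
On the interval between `0` and `u` evenness and monotonicity of `φ` give
`|h| ≤ f₀ + c φ(|u|)`, so `|H(u)| ≤ (f₀ + c φ(|u|)) |u|`. Young's inequality at `c |u|` bounds
`f₀ · c|u|` by `B̄(f₀) + B(c u)` and `φ(|u|) · c|u|` by `B̄(φ(|u|)) + B(c u) ≤ 2 B(c u)`.
-/

namespace IsNFunction

variable {B : ℝ → ℝ}

theorem map_abs (hB : IsNFunction B) (x : ℝ) : B |x| = B x := by
  rcases abs_choice x with hx | hx <;> simp only [hx, hB.2.2.1]

/-- Beyond the point where `B t / t ≥ |s|` the expression `|s| * t - B t` is nonpositive, and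
before it it is bounded by compactness. -/
theorem bddAbove_conjN_set (hB : IsNFunction B) (s : ℝ) :
    BddAbove ((fun t => |s| * t - B t) '' Set.Ici (0 : ℝ)) := by
  obtain ⟨hcont, -, -, -, -, hsuperlinear⟩ := hB
  obtain ⟨T, hT⟩ := (hsuperlinear.eventually_ge_atTop |s|).exists_forall_of_atTop
  obtain ⟨M, hM⟩ := (isCompact_Icc (a := 0) (b := max T 1)).bddAbove_image
    (by fun_prop : Continuous fun t => |s| * t - B t).continuousOn
  refine ⟨max M 0, ?_⟩
  rintro _ ⟨t, ht, rfl⟩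
  rcases le_or_gt t (max T 1) with hle | hgt
  · exact le_max_of_le_left (hM ⟨t, ⟨ht, hle⟩, rfl⟩)
  · have ht_pos : 0 < t := lt_of_lt_of_le one_pos ((le_max_right T 1).trans hgt.le)
    have : |s| * t ≤ B t := (le_div_iff₀ ht_pos).1 (hT t ((le_max_left T 1).trans hgt.le))
    exact le_max_of_le_right (by simpa using this)

theorem mul_le_conjN_add (hB : IsNFunction B) (s : ℝ) {t : ℝ} (ht : 0 ≤ t) :
    s * t ≤ conjN B s + B t := by
  have : |s| * t - B t ≤ conjN B s := le_csSup (hB.bddAbove_conjN_set s) ⟨t, ht, rfl⟩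
  nlinarith [le_abs_self s]

end IsNFunction

theorem MonotoneOn.apply_le_of_abs_le {φ : ℝ → ℝ} (hφ_even : ∀ t, φ (-t) = φ t)
    (hφ_mono : MonotoneOn φ (Set.Ici 0)) {t u : ℝ} (htu : |t| ≤ |u|) : φ t ≤ φ |u| := by
  have hφ_abs : φ |t| = φ t := by rcases abs_choice t with ht | ht <;> simp only [ht, hφ_even]
  exact hφ_abs ▸ hφ_mono (abs_nonneg t) (abs_nonneg u) htu

theorem primitive_growth_bound_general
    (B : ℝ → ℝ) (hB : IsNFunction B)
    (f₀ c : ℝ) (hc : 0 < c)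
    (φ : ℝ → ℝ)
    (hφ_even : ∀ t : ℝ, φ (-t) = φ t)
    (hφ_mono : MonotoneOn φ (Set.Ici (0 : ℝ)))
    (hφ : ∀ t : ℝ, conjN B (φ t) ≤ B (c * t))
    (h : ℝ → ℝ)
    (hgrowth : ∀ t : ℝ, |h t| ≤ f₀ + c * φ t) :
    ∀ u : ℝ, |∫ t in (0 : ℝ)..u, h t| ≤ (1 / c) * conjN B f₀ + (2 + 1 / c) * B (c * u) := by
  intro u
  have hbound : ∀ t ∈ Set.uIoc 0 u, ‖h t‖ ≤ f₀ + c * φ |u| := fun t ht => by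
    have htu : |t| ≤ |u| := by simpa using Set.abs_sub_left_of_mem_uIcc (Set.uIoc_subset_uIcc ht)
    grw [Real.norm_eq_abs, hgrowth t, hφ_mono.apply_le_of_abs_le hφ_even htu]
  have hcu : 0 ≤ c * |u| := by positivity
  have hBu : B (c * |u|) = B (c * u) := by rw [← hB.map_abs (c * u), abs_mul, abs_of_pos hc]
  calc |∫ t in (0 : ℝ)..u, h t|
      ≤ (f₀ + c * φ |u|) * |u| := by
        simpa using intervalIntegral.norm_integral_le_of_norm_le_const hbound
    _ = 1 / c * (f₀ * (c * |u|)) + φ |u| * (c * |u|) := by field_simp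
    _ ≤ 1 / c * (conjN B f₀ + B (c * |u|)) + (conjN B (φ |u|) + B (c * |u|)) := by
        gcongr
        exacts [hB.mul_le_conjN_add f₀ hcu, hB.mul_le_conjN_add (φ |u|) hcu]
    _ ≤ 1 / c * conjN B f₀ + (2 + 1 / c) * B (c * u) := by
        rw [← hBu]; linarith [hφ |u|]

/-- the growth condition `|h t| ≤ f₀ + c·φ t` with `B̄(φ t) ≤ B(c t)`
implies the growth bound `|H u| ≤ (1/c)·B̄ f₀ + (2 + 1/c)·B (c u)` for the
primitive `H u = ∫₀ᵘ h`. -/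
theorem primitive_growth_bound
    (B : ℝ → ℝ) (hB : IsNFunction B)
    (f₀ c : ℝ) (hf₀ : 0 ≤ f₀) (hc : 0 < c)
    (φ : ℝ → ℝ) (hφ_nonneg : ∀ t : ℝ, 0 ≤ φ t)
    (hφ_even : ∀ t : ℝ, φ (-t) = φ t)
    (hφ_mono : MonotoneOn φ (Set.Ici (0 : ℝ)))
    (hφ : ∀ t : ℝ, conjN B (φ t) ≤ B (c * t))
    (h : ℝ → ℝ)
    (hloc : MeasureTheory.LocallyIntegrable h MeasureTheory.volume)
    (hgrowth : ∀ t : ℝ, |h t| ≤ f₀ + c * φ t) :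
    ∀ u : ℝ, |∫ t in (0 : ℝ)..u, h t| ≤ (1 / c) * conjN B f₀ + (2 + 1 / c) * B (c * u) :=
  primitive_growth_bound_general B hB f₀ c hc φ hφ_even hφ_mono hφ h hgrowth
end
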